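/- arXiv:2509.22766 — 3 statements merged into one kernel-verified Lean document; each statement's English description precedes it below -/
import Mathlib

section
/- Let a, b ∈ ℂⁿ and ε ∈ [0, 1) satisfy min_{1≤k≤n} |a_k| ≥ 1 − ε and min_{1≤k≤n} |b_k| ≥ 1 − ε. Then the projected distance between the phase projections satisfies d_M(P(a), P(b)) ≤ (1/(1 − ε)) ‖a − b‖₂. -/
open MeasureTheory ProbabilityTheory Matrix
open scoped BigOperators

/-- The ℓ₂ norm of a complex vector. -/
noncomputable def l2norm {n : ℕ} (x : Fin n → ℂ) : ℝ :=
  Real.sqrt (∑ k, ‖x k‖ ^ 2)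

/-- The projected distance `d_M(x,y) = min_θ ‖x − e^{iθ} y‖₂` on the quotient of ℂⁿ
by global phase rotations. -/
noncomputable def dM {n : ℕ} (x y : Fin n → ℂ) : ℝ :=
  ⨅ θ : ℝ, l2norm (x - Complex.exp (θ * Complex.I) • y)

/-- Entrywise phase projection `P(a)_k = a_k / |a_k|`. -/
noncomputable def phaseProj {n : ℕ} (a : Fin n → ℂ) : Fin n → ℂ :=
  fun k => a k / (‖a k‖ : ℂ)

/-- The spectral norm (ℓ₂ operator norm) of a complex matrix. -/
noncomputable def specNorm {n : ℕ} (W : Matrix (Fin n) (Fin n) ℂ) : ℝ :=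
  ⨆ x : { x : Fin n → ℂ // l2norm x ≤ 1 }, l2norm (W.mulVec x.1)

/-- The entrywise sup norm of a complex vector. -/
noncomputable def linftyNorm {n : ℕ} (x : Fin n → ℂ) : ℝ :=
  ⨆ k, ‖x k‖

lemma phase_key (z w : ℂ) (c : ℝ) (hc : 0 < c) (hz : c ≤ ‖z‖)
    (hw : c ≤ ‖w‖) :
    ‖z / (‖z‖ : ℂ) - w / (‖w‖ : ℂ)‖
      ≤ ‖z - w‖ / c := by
  set r := ‖z‖ with hr
  set s := ‖w‖ with hs
  have hr0 : 0 < r := lt_of_lt_of_le hc hz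
  have hs0 : 0 < s := lt_of_lt_of_le hc hw
  have hrc : (r : ℂ) ≠ 0 := by exact_mod_cast hr0.ne'
  have hsc : (s : ℂ) ≠ 0 := by exact_mod_cast hs0.ne'
  have hquot : z / (r:ℂ) - w / (s:ℂ) = (z * s - w * r) / ((r:ℂ) * s) := by
    field_simp
  rw [hquot, norm_div]
  have habsden : ‖(r:ℂ) * s‖ = r * s := by
    rw [norm_mul, Complex.norm_real, Complex.norm_real, Real.norm_eq_abs, Real.norm_eq_abs,
      abs_of_pos hr0, abs_of_pos hs0]
  rw [habsden, div_le_div_iff₀ (by positivity) hc]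
  set t := (z * (starRingEnd ℂ) w).re with ht
  have h1 : Complex.normSq (z - w) = r^2 + s^2 - 2 * t := by
    rw [Complex.normSq_sub, ← Complex.sq_norm, ← Complex.sq_norm]
  have h2 : Complex.normSq (z * s - w * r) = 2*(r*s)^2 - 2*(r*s) * t := by
    rw [Complex.normSq_sub, Complex.normSq_mul, Complex.normSq_mul,
      Complex.normSq_ofReal, Complex.normSq_ofReal, ← Complex.sq_norm z, ← Complex.sq_norm w]
    have : (z * ↑s * (starRingEnd ℂ) (w * ↑r)).re = t * (s * r) := by
      rw [_root_.map_mul, Complex.conj_ofReal]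
      have : z * ↑s * ((starRingEnd ℂ) w * ↑r) = z * (starRingEnd ℂ) w * ((s*r : ℝ):ℂ) := by
        push_cast; ring
      rw [this, Complex.mul_re]
      simp [ht]
    rw [this]; ring
  have h3 : t ≤ r * s := by
    calc t ≤ ‖z * (starRingEnd ℂ) w‖ := Complex.re_le_norm _
    _ = r * s := by rw [norm_mul, Complex.norm_conj]
  -- goal: abs (z*s - w*r) * c ≤ abs (z - w) * (r*s)
  have hsq : (‖z * s - w * r‖ * c)^2 ≤ (‖z - w‖ * (r*s))^2 := by
    rw [mul_pow, mul_pow, Complex.sq_norm, Complex.sq_norm, h1, h2]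
    have hcc : c^2 ≤ r*s := by nlinarith
    have hfac : 0 ≤ 2*(r*s)^2 - 2*(r*s)*t := by nlinarith
    have e1 : (2*(r*s)^2 - 2*(r*s)*t) * c^2 ≤ (2*(r*s)^2 - 2*(r*s)*t) * (r*s) :=
      mul_le_mul_of_nonneg_left hcc hfac
    have e2 : (2*(r*s)^2 - 2*(r*s)*t) * (r*s) ≤ (r^2 + s^2 - 2*t) * (r*s)^2 := by
      nlinarith [sq_nonneg (r - s), mul_pos hr0 hs0, sq_nonneg (r*s)]
    linarith
  exact le_of_pow_le_pow_left₀ two_ne_zero (by positivity) hsq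

/-- **Stability of the phase projection.**  If all entries of `a` and `b` have modulus at
least `1 − ε` for some `ε ∈ [0,1)`, then
`d_M(P(a), P(b)) ≤ ‖a − b‖₂ / (1 − ε)`. -/
theorem phaseProj_stability {n : ℕ} (a b : Fin n → ℂ) (ε : ℝ)
    (hε0 : 0 ≤ ε) (hε1 : ε < 1)
    (ha : ∀ k, 1 - ε ≤ ‖a k‖)
    (hb : ∀ k, 1 - ε ≤ ‖b k‖) :
    dM (phaseProj a) (phaseProj b) ≤ (1 / (1 - ε)) * l2norm (a - b) := by
  have hc : 0 < 1 - ε := by linarith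
  have hle : dM (phaseProj a) (phaseProj b) ≤ l2norm (phaseProj a - phaseProj b) := by
    have h0 : l2norm (phaseProj a - phaseProj b)
        = l2norm (phaseProj a - Complex.exp ((0:ℝ) * Complex.I) • phaseProj b) := by
      norm_num
    rw [h0]
    refine ciInf_le ⟨0, ?_⟩ (0:ℝ)
    rintro x ⟨θ, rfl⟩
    exact Real.sqrt_nonneg _
  refine hle.trans ?_
  unfold l2norm
  have hrw : (1/(1-ε)) * Real.sqrt (∑ k, ‖(a-b) k‖^2)
      = Real.sqrt ((1/(1-ε))^2 * ∑ k, ‖(a-b) k‖^2) := by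
    rw [Real.sqrt_mul (by positivity), Real.sqrt_sq (by positivity)]
  rw [hrw]
  apply Real.sqrt_le_sqrt
  rw [Finset.mul_sum]
  apply Finset.sum_le_sum
  intro k _
  have hk := phase_key (a k) (b k) (1-ε) hc (ha k) (hb k)
  have h2 : ‖(phaseProj a - phaseProj b) k‖ ^ 2
      ≤ (‖(a-b) k‖ / (1-ε))^2 := by
    apply pow_le_pow_left₀ (norm_nonneg _)
    simpa [phaseProj, Pi.sub_apply] using hk
  calc ‖(phaseProj a - phaseProj b) k‖ ^ 2
      ≤ (‖(a-b) k‖ / (1-ε))^2 := h2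
    _ = (1/(1-ε))^2 * ‖(a-b) k‖^2 := by ring
end

section
/- Let C = z z* + σ W with σ ≤ c₀ √(n / log n) for a sufficiently small absolute constant c₀ > 0, and suppose ‖W‖₂ ≤ C_noise √n. There exist absolute constants κ₂, κ₃ > 0 such that on the contraction region N = { x ∈ ℂⁿ : ‖W x‖_∞ ≤ κ₂ √(n log n) and d_M(x, z) ≤ κ₃ √n }, the generalized power method map T(x) = P(C x) is a contraction: for all x, y ∈ N, d_M(T(x), T(y)) ≤ ρ · d_M(x, y), where ρ = (6 κ₃ + C_spec σ/√n) / (1 − η) with η = κ₃²/2 + κ₂ σ √(log n / n), and under the stated noise condition ρ < 1. -/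
open MeasureTheory ProbabilityTheory Matrix
open scoped BigOperators

local notation "cabs" => (Norm.norm : ℂ → ℝ)

lemma cabs_ofReal (r : ℝ) : ‖(r : ℂ)‖ = |r| := by rw [Complex.norm_real, Real.norm_eq_abs]

lemma cabs_conj (z : ℂ) : ‖(starRingEnd ℂ) z‖ = ‖z‖ := RCLike.norm_conj z

lemma cabs_natCast (k : ℕ) : ‖(k : ℂ)‖ = k := by simp

namespace GPMAux

variable {n : ℕ}

/-! ### ℓ₂ norm infrastructure -/

lemma l2E (x : Fin n → ℂ) : l2norm x = ‖(WithLp.equiv 2 (Fin n → ℂ)).symm x‖ := by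
  rw [EuclideanSpace.norm_eq]
  simp only [l2norm]; rfl

lemma l2norm_nonneg (x : Fin n → ℂ) : 0 ≤ l2norm x := Real.sqrt_nonneg _

lemma l2norm_add_le (x y : Fin n → ℂ) : l2norm (x + y) ≤ l2norm x + l2norm y := by
  rw [l2E, l2E, l2E]
  exact norm_add_le _ _

lemma l2norm_smul' (c : ℂ) (x : Fin n → ℂ) : l2norm (c • x) = cabs c * l2norm x := by
  rw [l2E, l2E]
  have he : (WithLp.equiv 2 (Fin n → ℂ)).symm (c • x)
      = c • (WithLp.equiv 2 (Fin n → ℂ)).symm x := rfl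
  rw [he, norm_smul]

lemma l2norm_smul_real (c : ℝ) (x : Fin n → ℂ) : l2norm (c • x) = |c| * l2norm x := by
  rw [l2E, l2E]
  have he : (WithLp.equiv 2 (Fin n → ℂ)).symm (c • x)
      = c • (WithLp.equiv 2 (Fin n → ℂ)).symm x := rfl
  rw [he, norm_smul, Real.norm_eq_abs]

lemma cauchy_schwarz (f g : Fin n → ℂ) :
    cabs (∑ j, (starRingEnd ℂ) (f j) * g j) ≤ l2norm f * l2norm g := by
  have h : (∑ j, (starRingEnd ℂ) (f j) * g j)
      = @inner ℂ _ _ ((WithLp.equiv 2 (Fin n → ℂ)).symm f)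
          ((WithLp.equiv 2 (Fin n → ℂ)).symm g) := by
    simp [PiLp.inner_apply, RCLike.inner_apply, mul_comm]
  rw [h, l2E, l2E]
  exact norm_inner_le_norm _ _

lemma coord_le_l2norm (x : Fin n → ℂ) (k : Fin n) : cabs (x k) ≤ l2norm x := by
  have h1 : cabs (x k) = Real.sqrt (cabs (x k) ^ 2) := by
    rw [Real.sqrt_sq (norm_nonneg _)]
  rw [h1]
  exact Real.sqrt_le_sqrt (Finset.single_le_sum (f := fun i => cabs (x i) ^ 2)
    (fun i _ => sq_nonneg _) (Finset.mem_univ k))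

lemma l2norm_le_of_pointwise (D : Fin n → ℂ) (f : Fin n → ℝ)
    (h : ∀ k, cabs (D k) ≤ f k) : l2norm D ≤ Real.sqrt (∑ k, f k ^ 2) := by
  apply Real.sqrt_le_sqrt
  apply Finset.sum_le_sum
  intro k _
  exact pow_le_pow_left₀ (norm_nonneg _) (h k) 2

lemma sqrt_sum_add_le (a b : Fin n → ℝ) :
    Real.sqrt (∑ k, (a k + b k) ^ 2) ≤ Real.sqrt (∑ k, a k ^ 2) + Real.sqrt (∑ k, b k ^ 2) := by
  have key : ∀ c : Fin n → ℝ, Real.sqrt (∑ k, c k ^ 2)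
      = ‖(WithLp.equiv 2 (Fin n → ℝ)).symm c‖ := by
    intro c
    rw [EuclideanSpace.norm_eq]
    congr 1; apply Finset.sum_congr rfl; intro k _
    rw [Real.norm_eq_abs, sq_abs]; rfl
  calc Real.sqrt (∑ k, (a k + b k) ^ 2)
      = ‖(WithLp.equiv 2 (Fin n → ℝ)).symm a + (WithLp.equiv 2 (Fin n → ℝ)).symm b‖ := by
        have := key (fun k => a k + b k)
        rw [this]; rfl
    _ ≤ _ := by rw [key a, key b]; exact norm_add_le _ _

/-! ### dM / specNorm / linftyNorm infrastructure -/

lemma dM_le (x y : Fin n → ℂ) (θ : ℝ) :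
    dM x y ≤ l2norm (x - Complex.exp (θ * Complex.I) • y) :=
  ciInf_le ⟨0, by rintro r ⟨θ', rfl⟩; exact l2norm_nonneg _⟩ θ

lemma le_dM (x y : Fin n → ℂ) (c : ℝ)
    (h : ∀ θ : ℝ, c ≤ l2norm (x - Complex.exp (θ * Complex.I) • y)) : c ≤ dM x y :=
  le_ciInf h

lemma dM_nonneg (x y : Fin n → ℂ) : 0 ≤ dM x y := le_dM x y 0 (fun _ => l2norm_nonneg _)

lemma abs_coord_le_linfty (w : Fin n → ℂ) (k : Fin n) : cabs (w k) ≤ linftyNorm w :=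
  le_ciSup (f := fun k => cabs (w k)) (Set.Finite.bddAbove (Set.finite_range _)) k

lemma specNorm_bound (W : Matrix (Fin n) (Fin n) ℂ) (v : Fin n → ℂ) :
    l2norm (W.mulVec v) ≤ specNorm W * l2norm v := by
  have hbdd : BddAbove (Set.range (fun x : { x : Fin n → ℂ // l2norm x ≤ 1 } =>
      l2norm (W.mulVec x.1))) := by
    refine ⟨Real.sqrt (∑ i, (∑ j, cabs (W i j)) ^ 2), ?_⟩
    rintro r ⟨⟨w, hw⟩, rfl⟩
    apply Real.sqrt_le_sqrt
    apply Finset.sum_le_sum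
    intro i _
    apply pow_le_pow_left₀ (norm_nonneg _)
    calc cabs (W.mulVec w i) = cabs (∑ j, W i j * w j) := rfl
      _ ≤ ∑ j, cabs (W i j * w j) := norm_sum_le _ _
      _ ≤ ∑ j, cabs (W i j) := by
          apply Finset.sum_le_sum
          intro j _
          rw [norm_mul]
          calc cabs (W i j) * cabs (w j)
              ≤ cabs (W i j) * 1 := by
                apply mul_le_mul_of_nonneg_left _ (norm_nonneg _)
                exact le_trans (coord_le_l2norm w j) hw
            _ = cabs (W i j) := mul_one _
  by_cases hv : l2norm v = 0
  · have hv0 : v = 0 := by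
      have h1 : ‖(WithLp.equiv 2 (Fin n → ℂ)).symm v‖ = 0 := by rw [← l2E]; exact hv
      have h2 := norm_eq_zero.mp h1
      funext k
      exact congrArg (fun w => w k) h2
    rw [hv0] at hv
    rw [hv0, Matrix.mulVec_zero, hv, mul_zero]
  · have hvpos : 0 < l2norm v := lt_of_le_of_ne (l2norm_nonneg v) (Ne.symm hv)
    set c : ℝ := (l2norm v)⁻¹ with hc
    have hcv : l2norm (c • v) = 1 := by
      rw [l2norm_smul_real, abs_of_pos (by rw [hc]; exact inv_pos.mpr hvpos)]
      rw [hc, inv_mul_cancel₀ hv]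
    have h1 : l2norm (W.mulVec (c • v)) ≤ specNorm W :=
      le_ciSup (f := fun x : { x : Fin n → ℂ // l2norm x ≤ 1 } => l2norm (W.mulVec x.1)) hbdd
        (⟨c • v, le_of_eq hcv⟩ : { x : Fin n → ℂ // l2norm x ≤ 1 })
    have h2 : W.mulVec (c • v) = c • W.mulVec v := Matrix.mulVec_smul W c v
    rw [h2, l2norm_smul_real, abs_of_pos (by rw [hc]; exact inv_pos.mpr hvpos)] at h1
    calc l2norm (W.mulVec v) = (l2norm v) * (c * l2norm (W.mulVec v)) := by
          rw [hc, ← mul_assoc, mul_inv_cancel₀ hv, one_mul]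
      _ ≤ l2norm v * specNorm W := mul_le_mul_of_nonneg_left h1 (le_of_lt hvpos)
      _ = specNorm W * l2norm v := mul_comm _ _

/-! ### scalar phase lemmas -/

lemma phase_lip (p q : ℂ) (hp : p ≠ 0) (hq : q ≠ 0) :
    cabs (p / (cabs p : ℂ) - q / (cabs q : ℂ))
      ≤ 2 * cabs (p - q) / cabs p := by
  have hap : (0:ℝ) < cabs p := norm_pos_iff.mpr hp
  have haq : (0:ℝ) < cabs q := norm_pos_iff.mpr hq
  have hap' : (cabs p : ℂ) ≠ 0 := by exact_mod_cast ne_of_gt hap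
  have haq' : (cabs q : ℂ) ≠ 0 := by exact_mod_cast ne_of_gt haq
  have key : p / (cabs p : ℂ) - q / (cabs q : ℂ)
      = (p * (cabs q : ℂ) - q * (cabs p : ℂ)) /
          ((cabs p : ℂ) * (cabs q : ℂ)) := by
    field_simp
  rw [key, norm_div, norm_mul]
  simp only [cabs_ofReal, abs_of_pos hap, abs_of_pos haq]
  have hnum : cabs (p * (cabs q : ℂ) - q * (cabs p : ℂ))
      ≤ 2 * cabs q * cabs (p - q) := by
    have hd : p * (cabs q : ℂ) - q * (cabs p : ℂ)
        = (p - q) * (cabs q : ℂ) + q * ((cabs q : ℂ) - (cabs p : ℂ)) := by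
      ring
    rw [hd]
    calc cabs _ ≤ cabs ((p - q) * (cabs q : ℂ))
          + cabs (q * ((cabs q : ℂ) - (cabs p : ℂ))) :=
          norm_add_le _ _
      _ = cabs (p - q) * cabs q
          + cabs q * |cabs q - cabs p| := by
          rw [norm_mul, norm_mul]
          congr 2
          · rw [cabs_ofReal, _root_.abs_of_nonneg (norm_nonneg q)]
          · rw [← Complex.ofReal_sub, cabs_ofReal]
      _ ≤ cabs (p - q) * cabs q + cabs q * cabs (p - q) := by
          have := abs_norm_sub_norm_le q p
          have h2 : cabs (q - p) = cabs (p - q) :=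
            norm_sub_rev q p
          nlinarith [norm_nonneg q]
      _ = 2 * cabs q * cabs (p - q) := by ring
  rw [div_le_div_iff₀ (by positivity) hap]
  calc cabs (p * (cabs q : ℂ) - q * (cabs p : ℂ)) * cabs p
      ≤ (2 * cabs q * cabs (p - q)) * cabs p :=
        mul_le_mul_of_nonneg_right hnum (norm_nonneg p)
    _ = 2 * cabs (p - q) * (cabs p * cabs q) := by ring

lemma phase_diff (μ ν m τ : ℝ) (s t : ℂ) (hm : 0 < m) (hμ : m ≤ μ) (hν : m ≤ ν)
    (hs : cabs s ≤ τ) (ht : cabs t ≤ τ) (h2 : 2 * τ ≤ m) :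
    cabs (((μ:ℂ) + s) / (cabs ((μ:ℂ) + s) : ℂ)
        - ((ν:ℂ) + t) / (cabs ((ν:ℂ) + t) : ℂ))
      ≤ 4 / m * cabs (s - t) + 4 * τ / m ^ 2 * |μ - ν| := by
  have hμ0 : (0:ℝ) < μ := lt_of_lt_of_le hm hμ
  have hν0 : (0:ℝ) < ν := lt_of_lt_of_le hm hν
  have hτ0 : 0 ≤ τ := le_trans (norm_nonneg s) hs
  have low : ∀ (ρ : ℝ) (c : ℂ), m ≤ ρ → cabs c ≤ τ → m / 2 ≤ cabs ((ρ:ℂ) + c) := by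
    intro ρ c hρ hc
    have h1 : cabs ((ρ:ℂ)) ≤ cabs ((ρ:ℂ) + c) + cabs c := by
      calc cabs ((ρ:ℂ)) = cabs (((ρ:ℂ) + c) + (-c)) := by ring_nf
        _ ≤ cabs ((ρ:ℂ) + c) + cabs (-c) := norm_add_le _ _
        _ = cabs ((ρ:ℂ) + c) + cabs c := by
            rw [norm_neg]
    have h3 : cabs ((ρ:ℂ)) = ρ := by
      rw [cabs_ofReal, abs_of_pos (lt_of_lt_of_le hm hρ)]
    linarith
  have hμs : ((μ:ℂ) + s) ≠ 0 := by
    intro h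
    have := low μ s hμ hs
    rw [h, norm_zero] at this
    linarith
  have hμt : ((μ:ℂ) + t) ≠ 0 := by
    intro h
    have := low μ t hμ ht
    rw [h, norm_zero] at this
    linarith
  have hνt : ((ν:ℂ) + t) ≠ 0 := by
    intro h
    have := low ν t hν ht
    rw [h, norm_zero] at this
    linarith
  have step1 : cabs (((μ:ℂ) + s) / (cabs ((μ:ℂ) + s) : ℂ)
      - ((μ:ℂ) + t) / (cabs ((μ:ℂ) + t) : ℂ)) ≤ 4 / m * cabs (s - t) := by
    have := phase_lip ((μ:ℂ) + s) ((μ:ℂ) + t) hμs hμt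
    have hd : ((μ:ℂ) + s) - ((μ:ℂ) + t) = s - t := by ring
    rw [hd] at this
    have hlow := low μ s hμ hs
    calc _ ≤ 2 * cabs (s - t) / cabs ((μ:ℂ) + s) := this
      _ ≤ 2 * cabs (s - t) / (m / 2) :=
          div_le_div_of_nonneg_left (by positivity) (by positivity) hlow
      _ = 4 / m * cabs (s - t) := by field_simp; ring
  have rescale : ∀ (ρ : ℝ) (c : ℂ), 0 < ρ →
      ((ρ:ℂ) + c) / (cabs ((ρ:ℂ) + c) : ℂ)
        = (1 + c / (ρ:ℂ)) / (cabs (1 + c / (ρ:ℂ)) : ℂ) := by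
    intro ρ c hρ
    have hρ' : (ρ:ℂ) ≠ 0 := by exact_mod_cast ne_of_gt hρ
    have hfac : (ρ:ℂ) + c = (ρ:ℂ) * (1 + c / (ρ:ℂ)) := by field_simp
    rw [hfac, norm_mul, cabs_ofReal, abs_of_pos hρ, Complex.ofReal_mul]
    rw [mul_div_mul_left _ _ hρ']
  have low2 : ∀ (ρ : ℝ) (c : ℂ), m ≤ ρ → cabs c ≤ τ →
      (1:ℂ) + c / (ρ:ℂ) ≠ 0 ∧ (1:ℝ)/2 ≤ cabs (1 + c / (ρ:ℂ)) := by
    intro ρ c hρ hc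
    have hρ0 : (0:ℝ) < ρ := lt_of_lt_of_le hm hρ
    have habs : cabs (c / (ρ:ℂ)) ≤ 1/2 := by
      rw [norm_div, cabs_ofReal, abs_of_pos hρ0]
      rw [div_le_iff₀ hρ0]
      calc cabs c ≤ τ := hc
        _ ≤ m / 2 := by linarith
        _ ≤ ρ / 2 := by linarith
        _ = 1/2 * ρ := by ring
    have h1 : cabs (1:ℂ) ≤ cabs (1 + c / (ρ:ℂ)) + cabs (c / (ρ:ℂ)) := by
      calc cabs (1:ℂ) = cabs ((1 + c/(ρ:ℂ)) + (-(c/(ρ:ℂ)))) := by ring_nf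
        _ ≤ _ := norm_add_le _ _
        _ = cabs (1 + c / (ρ:ℂ)) + cabs (c / (ρ:ℂ)) := by
            rw [norm_neg]
    rw [norm_one] at h1
    constructor
    · intro h
      rw [h, norm_zero] at h1
      linarith
    · linarith
  have step2 : cabs (((μ:ℂ) + t) / (cabs ((μ:ℂ) + t) : ℂ)
      - ((ν:ℂ) + t) / (cabs ((ν:ℂ) + t) : ℂ)) ≤ 4 * τ / m ^ 2 * |μ - ν| := by
    rw [rescale μ t hμ0, rescale ν t hν0]
    obtain ⟨hne1, hlow1⟩ := low2 μ t hμ ht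
    obtain ⟨hne2, hlow2⟩ := low2 ν t hν ht
    have := phase_lip (1 + t / (μ:ℂ)) (1 + t / (ν:ℂ)) hne1 hne2
    have hd : (1 + t / (μ:ℂ)) - (1 + t / (ν:ℂ)) = t * ((ν:ℂ) - (μ:ℂ)) / ((μ:ℂ)*(ν:ℂ)) := by
      have hμ' : (μ:ℂ) ≠ 0 := by exact_mod_cast ne_of_gt hμ0
      have hν' : (ν:ℂ) ≠ 0 := by exact_mod_cast ne_of_gt hν0
      field_simp
      ring
    rw [hd] at this
    have habs2 : cabs (t * ((ν:ℂ) - (μ:ℂ)) / ((μ:ℂ)*(ν:ℂ)))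
        ≤ τ * |μ - ν| / m ^ 2 := by
      rw [norm_div, norm_mul, norm_mul]
      have h1 : cabs ((ν:ℂ) - (μ:ℂ)) = |μ - ν| := by
        rw [← Complex.ofReal_sub, cabs_ofReal, abs_sub_comm]
      have h2 : cabs ((μ:ℂ)) = μ := by rw [cabs_ofReal, abs_of_pos hμ0]
      have h3 : cabs ((ν:ℂ)) = ν := by rw [cabs_ofReal, abs_of_pos hν0]
      rw [h1, h2, h3]
      apply div_le_div₀ (by positivity)
      · exact mul_le_mul_of_nonneg_right ht (abs_nonneg _)
      · positivity
      · nlinarith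
    calc _ ≤ 2 * cabs (t * ((ν:ℂ) - (μ:ℂ)) / ((μ:ℂ)*(ν:ℂ)))
          / cabs (1 + t / (μ:ℂ)) := this
      _ ≤ 2 * (τ * |μ - ν| / m ^ 2) / (1/2) := by
          apply div_le_div₀ (by positivity) _ (by norm_num) hlow1
          nlinarith [norm_nonneg (t * ((ν:ℂ) - (μ:ℂ)) / ((μ:ℂ)*(ν:ℂ)))]
      _ = 4 * τ / m ^ 2 * |μ - ν| := by ring
  calc cabs _ ≤ cabs (((μ:ℂ) + s) / (cabs ((μ:ℂ) + s) : ℂ)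
        - ((μ:ℂ) + t) / (cabs ((μ:ℂ) + t) : ℂ))
      + cabs (((μ:ℂ) + t) / (cabs ((μ:ℂ) + t) : ℂ)
        - ((ν:ℂ) + t) / (cabs ((ν:ℂ) + t) : ℂ)) := by
        have heq : (((μ:ℂ) + s) / (cabs ((μ:ℂ) + s) : ℂ)
            - ((ν:ℂ) + t) / (cabs ((ν:ℂ) + t) : ℂ))
          = (((μ:ℂ) + s) / (cabs ((μ:ℂ) + s) : ℂ)
            - ((μ:ℂ) + t) / (cabs ((μ:ℂ) + t) : ℂ))
          + (((μ:ℂ) + t) / (cabs ((μ:ℂ) + t) : ℂ)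
            - ((ν:ℂ) + t) / (cabs ((ν:ℂ) + t) : ℂ)) := by ring
        rw [heq]
        exact norm_add_le _ _
    _ ≤ 4 / m * cabs (s - t) + 4 * τ / m ^ 2 * |μ - ν| := add_le_add step1 step2

lemma phase_unit_mul (c w : ℂ) (hc : cabs c = 1) :
    (c * w) / (cabs (c * w) : ℂ) = c * (w / (cabs w : ℂ)) := by
  rw [norm_mul, hc, one_mul, mul_div_assoc]

lemma phase_diff' (w s t : ℂ) (μ ν m τ : ℝ) (hw : cabs w = 1)
    (hm : 0 < m) (hμ : m ≤ μ) (hν : m ≤ ν)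
    (hs : cabs s ≤ τ) (ht : cabs t ≤ τ) (h2 : 2 * τ ≤ m) :
    cabs (((μ:ℂ) * w + s) / (cabs ((μ:ℂ) * w + s) : ℂ)
        - ((ν:ℂ) * w + t) / (cabs ((ν:ℂ) * w + t) : ℂ))
      ≤ 4 / m * cabs (s - t) + 4 * τ / m ^ 2 * |μ - ν| := by
  have hcw : cabs ((starRingEnd ℂ) w) = 1 := by rw [cabs_conj, hw]
  have key : ∀ (ρ : ℝ) (c : ℂ), (ρ:ℂ) * w + c = w * ((ρ:ℂ) + (starRingEnd ℂ) w * c) := by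
    intro ρ c
    have hww : w * (starRingEnd ℂ) w = 1 := by
      rw [Complex.mul_conj]
      norm_cast
      rw [Complex.normSq_eq_norm_sq, hw]; norm_num
    calc (ρ:ℂ) * w + c = (w * (starRingEnd ℂ) w) * c + (ρ:ℂ) * w := by rw [hww]; ring
      _ = w * ((ρ:ℂ) + (starRingEnd ℂ) w * c) := by ring
  rw [key μ s, key ν t, phase_unit_mul w _ hw, phase_unit_mul w _ hw, ← mul_sub, norm_mul, hw,
    one_mul]
  have h1 := phase_diff μ ν m τ ((starRingEnd ℂ) w * s) ((starRingEnd ℂ) w * t) hm hμ hν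
    (by rw [norm_mul, hcw, one_mul]; exact hs)
    (by rw [norm_mul, hcw, one_mul]; exact ht) h2
  have h2' : (starRingEnd ℂ) w * s - (starRingEnd ℂ) w * t = (starRingEnd ℂ) w * (s - t) := by
    ring
  rw [h2', norm_mul, hcw, one_mul] at h1
  exact h1

end GPMAux

namespace GPMAux2
open GPMAux

variable {n : ℕ}

lemma sum_conj_one (z : Fin n → ℂ) (hz : ∀ k, cabs (z k) = 1) :
    ∑ j, (starRingEnd ℂ) (z j) * z j = (n:ℂ) := by
  have h : ∀ j : Fin n, (starRingEnd ℂ) (z j) * z j = 1 := by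
    intro j
    rw [mul_comm, Complex.mul_conj, Complex.normSq_eq_norm_sq, hz j]
    norm_num
  rw [Finset.sum_congr rfl (fun j _ => h j), Finset.sum_const, Finset.card_univ,
    Fintype.card_fin, nsmul_eq_mul, mul_one]

lemma inner_sub (z f g : Fin n → ℂ) (c : ℂ) :
    (∑ j, (starRingEnd ℂ) (z j) * f j) - c * (∑ j, (starRingEnd ℂ) (z j) * g j)
      = ∑ j, (starRingEnd ℂ) (z j) * ((f - c • g) j) := by
  rw [Finset.mul_sum, ← Finset.sum_sub_distrib]
  apply Finset.sum_congr rfl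
  intro j _
  simp only [Pi.sub_apply, Pi.smul_apply, smul_eq_mul]
  ring

lemma l2norm_z (z : Fin n → ℂ) (hz : ∀ k, cabs (z k) = 1) :
    l2norm z = Real.sqrt n := by
  simp [l2norm, hz]

lemma inner_lower (z x : Fin n → ℂ) (hz : ∀ k, cabs (z k) = 1) (hn : 0 < (n:ℝ)) :
    (n:ℝ) - Real.sqrt n * dM x z ≤ cabs (∑ j, (starRingEnd ℂ) (z j) * x j) := by
  set u := ∑ j, (starRingEnd ℂ) (z j) * x j with hu
  have hs : 0 < Real.sqrt n := Real.sqrt_pos.mpr hn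
  have key : ∀ θ : ℝ, ((n:ℝ) - cabs u) / Real.sqrt n
      ≤ l2norm (x - Complex.exp (θ*Complex.I) • z) := by
    intro θ
    set e := Complex.exp (θ*Complex.I) with he
    have he1 : cabs e = 1 := Complex.norm_exp_ofReal_mul_I θ
    set S := ∑ j, (starRingEnd ℂ) (z j) * ((x - e • z) j) with hS
    have hsplit : S = u - e * (n:ℂ) := by
      rw [hS, ← inner_sub z x z e, sum_conj_one z hz]
    have h2 : cabs (e*(n:ℂ)) = n := by
      rw [norm_mul, he1, one_mul, cabs_natCast]
    have h3 : cabs (e*(n:ℂ)) ≤ cabs u + cabs S := by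
      have : e*(n:ℂ) = u + (-S) := by rw [hsplit]; ring
      rw [this]
      calc cabs (u + (-S)) ≤ cabs u + cabs (-S) := norm_add_le _ _
        _ = cabs u + cabs S := by rw [norm_neg]
    have h4 : cabs S ≤ Real.sqrt n * l2norm (x - e • z) := by
      calc cabs S ≤ l2norm z * l2norm (x - e • z) := cauchy_schwarz z _
        _ = Real.sqrt n * l2norm (x - e • z) := by rw [l2norm_z z hz]
    rw [div_le_iff₀ hs]
    nlinarith [l2norm_nonneg (x - e • z)]
  have h5 := le_dM x z _ key
  rw [div_le_iff₀ hs] at h5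
  nlinarith

lemma l2norm_le_dM_add (x z : Fin n → ℂ) (hz : ∀ k, cabs (z k) = 1) :
    l2norm x ≤ Real.sqrt n + dM x z := by
  have key : ∀ θ : ℝ, l2norm x - Real.sqrt n
      ≤ l2norm (x - Complex.exp (θ*Complex.I) • z) := by
    intro θ
    set e := Complex.exp (θ*Complex.I) with he
    have he1 : cabs e = 1 := Complex.norm_exp_ofReal_mul_I θ
    have h1 : l2norm x ≤ l2norm (x - e • z) + l2norm (e • z) := by
      conv_lhs => rw [show x = (x - e • z) + e • z by rw [sub_add_cancel]]
      exact l2norm_add_le _ _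
    have h3 : l2norm (e • z) = Real.sqrt n := by
      rw [l2norm_smul', he1, one_mul, l2norm_z z hz]
    linarith
  have := le_dM x z _ key
  linarith

lemma conj_phase_mul (w : ℂ) (hw : w ≠ 0) :
    (starRingEnd ℂ) (w / (cabs w : ℂ)) * w = (cabs w : ℂ) := by
  have hab : (0:ℝ) < cabs w := norm_pos_iff.mpr hw
  have hab' : ((cabs w : ℝ):ℂ) ≠ 0 := by exact_mod_cast ne_of_gt hab
  rw [map_div₀, Complex.conj_ofReal, div_mul_eq_mul_div, mul_comm ((starRingEnd ℂ) w) w,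
    Complex.mul_conj, Complex.normSq_eq_norm_sq]
  rw [show ((cabs w ^ 2 : ℝ):ℂ) = ((cabs w : ℝ):ℂ)^2 by push_cast; ring]
  rw [sq]
  field_simp

end GPMAux2

set_option maxHeartbeats 4000000 in
/-- **Local contractivity of the GPM map.**  Under `C = z z* + σ W` with
`σ ≤ c₀ √(n / log n)` for sufficiently small `c₀` and `‖W‖₂ ≤ C_noise √n`, there are
constants `κ₂, κ₃ > 0` such that on the contraction region
`N = { x : ‖W x‖_∞ ≤ κ₂ √(n log n), d_M(x, z) ≤ κ₃ √n }` the GPM map `T(x) = P(C x)`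
satisfies `d_M(T x, T y) ≤ ρ d_M(x, y)` with
`ρ = (6 κ₃ + C_spec σ/√n)/(1 − η) < 1`, where `η = κ₃²/2 + κ₂ σ √(log n / n)`. -/
theorem gpm_local_contractivity :
    ∀ Cnoise : ℝ, 0 < Cnoise →
    ∃ c₀ : ℝ, 0 < c₀ ∧ ∃ Cspec : ℝ, 0 < Cspec ∧
    ∃ κ₂ : ℝ, 0 < κ₂ ∧ ∃ κ₃ : ℝ, 0 < κ₃ ∧
      ∀ (n : ℕ) (z : Fin n → ℂ), (∀ k, ‖z k‖ = 1) →
        ∀ σ : ℝ, 0 < σ → σ ≤ c₀ * Real.sqrt ((n : ℝ) / Real.log n) →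
          ∀ W : Matrix (Fin n) (Fin n) ℂ, specNorm W ≤ Cnoise * Real.sqrt n →
            (6 * κ₃ + Cspec * σ / Real.sqrt n) /
                (1 - (κ₃ ^ 2 / 2 + κ₂ * σ * Real.sqrt (Real.log n / n))) < 1 ∧
            ∀ x y : Fin n → ℂ,
              linftyNorm (W.mulVec x) ≤ κ₂ * Real.sqrt (n * Real.log n) →
              dM x z ≤ κ₃ * Real.sqrt n →
              linftyNorm (W.mulVec y) ≤ κ₂ * Real.sqrt (n * Real.log n) →
              dM y z ≤ κ₃ * Real.sqrt n →
              dM (phaseProj ((Matrix.vecMulVec z (star z) + σ • W).mulVec x))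
                  (phaseProj ((Matrix.vecMulVec z (star z) + σ • W).mulVec y)) ≤
                (6 * κ₃ + Cspec * σ / Real.sqrt n) /
                    (1 - (κ₃ ^ 2 / 2 + κ₂ * σ * Real.sqrt (Real.log n / n))) *
                  dM x y := by

  open GPMAux GPMAux2 in
  intro Cnoise hCn
  have hc₀pos : (0:ℝ) < 1/(1000*(Cnoise+1)) := by
    apply div_pos one_pos
    nlinarith
  refine ⟨1/(1000*(Cnoise+1)), hc₀pos, 72*Cnoise, by positivity, 1/100, by norm_num,
    1/100, by norm_num, ?_⟩
  set c₀ : ℝ := 1/(1000*(Cnoise+1)) with hc₀def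
  have hc₀small : c₀ ≤ 1/1000 := by
    rw [hc₀def, div_le_div_iff₀ (by nlinarith) (by norm_num)]
    nlinarith
  have hCc : Cnoise * c₀ ≤ 1/1000 := by
    rw [hc₀def, mul_one_div, div_le_div_iff₀ (by nlinarith) (by norm_num)]
    nlinarith
  intro n z hz σ hσ hσle W hW
  -- dispose of small n
  have hn2 : 2 ≤ n := by
    by_contra hlt
    push_neg at hlt
    interval_cases n
    · norm_num [Real.log_zero] at hσle
      linarith
    · norm_num [Real.log_one] at hσle
      linarith
  have hn1 : (2:ℝ) ≤ (n:ℝ) := by exact_mod_cast hn2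
  have hnpos : (0:ℝ) < (n:ℝ) := by linarith
  set s : ℝ := Real.sqrt n with hsdef
  have hspos : 0 < s := Real.sqrt_pos.mpr hnpos
  have hss : s * s = (n:ℝ) := Real.mul_self_sqrt hnpos.le
  have hlogpos : 0 < Real.log n := Real.log_pos (by exact_mod_cast (by linarith : (1:ℝ) < n))
  have hloghalf : 1/2 ≤ Real.log n := by
    have h2 : Real.log 2 ≤ Real.log n := Real.log_le_log (by norm_num) hn1
    have := Real.log_two_gt_d9
    linarith
  -- basic σ bounds
  have B1 : σ * Real.sqrt (Real.log n / n) ≤ c₀ := by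
    have hmul : Real.sqrt ((n:ℝ)/Real.log n) * Real.sqrt (Real.log n/(n:ℝ)) = 1 := by
      rw [← Real.sqrt_mul (by positivity)]
      rw [show ((n:ℝ)/Real.log n) * (Real.log n/(n:ℝ)) = 1 by
        field_simp]
      exact Real.sqrt_one
    calc σ * Real.sqrt (Real.log n/(n:ℝ))
        ≤ (c₀ * Real.sqrt ((n:ℝ)/Real.log n)) * Real.sqrt (Real.log n/(n:ℝ)) :=
          mul_le_mul_of_nonneg_right hσle (Real.sqrt_nonneg _)
      _ = c₀ := by rw [mul_assoc, hmul, mul_one]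
  have B2 : σ * Real.sqrt ((n:ℝ) * Real.log n) ≤ c₀ * n := by
    have hsplit : Real.sqrt ((n:ℝ) * Real.log n) = n * Real.sqrt (Real.log n / n) := by
      rw [show (n:ℝ) * Real.log n = (n:ℝ)^2 * (Real.log n / n) by field_simp]
      rw [Real.sqrt_mul (by positivity), Real.sqrt_sq hnpos.le]
    calc σ * Real.sqrt ((n:ℝ)*Real.log n) = (n:ℝ) * (σ * Real.sqrt (Real.log n/n)) := by
          rw [hsplit]; ring
      _ ≤ (n:ℝ) * c₀ := mul_le_mul_of_nonneg_left B1 hnpos.le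
      _ = c₀ * n := mul_comm _ _
  have B3 : σ / s ≤ c₀ * (3/2) := by
    have h1 : Real.sqrt ((n:ℝ)/Real.log n) = s / Real.sqrt (Real.log n) :=
      Real.sqrt_div hnpos.le _
    have hsl : 0 < Real.sqrt (Real.log n) := Real.sqrt_pos.mpr hlogpos
    have h2 : (2:ℝ)/3 ≤ Real.sqrt (Real.log n) := by
      have h3 : ((2:ℝ)/3)^2 ≤ Real.log n := by nlinarith
      calc (2:ℝ)/3 = Real.sqrt (((2:ℝ)/3)^2) := (Real.sqrt_sq (by norm_num)).symm
        _ ≤ _ := Real.sqrt_le_sqrt h3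
    have h4 : σ / s ≤ c₀ / Real.sqrt (Real.log n) := by
      rw [div_le_div_iff₀ hspos hsl]
      have := hσle
      rw [h1] at this
      calc σ * Real.sqrt (Real.log n) ≤ (c₀ * (s / Real.sqrt (Real.log n)))
            * Real.sqrt (Real.log n) :=
          mul_le_mul_of_nonneg_right this (Real.sqrt_nonneg _)
        _ = c₀ * s := by field_simp
    calc σ / s ≤ c₀ / Real.sqrt (Real.log n) := h4
      _ ≤ c₀ * (3/2) := by
          rw [div_le_iff₀ hsl]
          nlinarith [hc₀pos.le]
  -- the contraction factor
  have hEnonneg : (0:ℝ) ≤ (1/100:ℝ)^2/2 + 1/100*σ*Real.sqrt (Real.log n / n) := by positivity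
  have hEbound : (1/100:ℝ)^2/2 + 1/100*σ*Real.sqrt (Real.log n / n) ≤ 1/20000 + c₀/100 := by
    have : 1/100*σ*Real.sqrt (Real.log n / n) = 1/100*(σ*Real.sqrt (Real.log n / n)) := by ring
    rw [this]
    have := B1
    linarith
  have hden : (0:ℝ) < 1 - ((1/100:ℝ)^2/2 + 1/100*σ*Real.sqrt (Real.log n / n)) := by
    have := hEbound
    linarith
  have hKterm : 72*Cnoise*σ/s ≤ 108/1000 := by
    have h1 : 72*Cnoise*σ/s = 72*(Cnoise*(σ/s)) := by ring
    rw [h1]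
    have h2 : Cnoise*(σ/s) ≤ Cnoise*(c₀*(3/2)) := mul_le_mul_of_nonneg_left B3 hCn.le
    nlinarith
  have hKnonneg : (0:ℝ) ≤ 6*(1/100:ℝ) + 72*Cnoise*σ/s := by positivity
  have hKpos : (0:ℝ) < 6*(1/100:ℝ) + 72*Cnoise*σ/s := by positivity
  constructor
  · -- ρ < 1
    rw [div_lt_one hden]
    linarith
  · intro x y hxinf hxz hyinf hyz
    set a : Fin n → ℂ := (Matrix.vecMulVec z (star z) + σ • W).mulVec x with hadef
    set b : Fin n → ℂ := (Matrix.vecMulVec z (star z) + σ • W).mulVec y with hbdef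
    have hexpand : ∀ (w : Fin n → ℂ) (k : Fin n),
        ((Matrix.vecMulVec z (star z) + σ • W).mulVec w) k
          = (∑ j, (starRingEnd ℂ) (z j) * w j) * z k + (σ:ℂ) * (W.mulVec w k) := by
      intro w k
      rw [Matrix.add_mulVec, Pi.add_apply, Matrix.smul_mulVec, Pi.smul_apply,
        Complex.real_smul]
      congr 1
      simp only [Matrix.mulVec, Matrix.vecMulVec_apply, dotProduct, Pi.star_apply,
        Complex.star_def]
      rw [Finset.sum_mul]
      apply Finset.sum_congr rfl
      intro j _
      ring
    set u : ℂ := ∑ j, (starRingEnd ℂ) (z j) * x j with hudef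
    set v' : ℂ := ∑ j, (starRingEnd ℂ) (z j) * y j with hv'def
    have hu_low : (n:ℝ)/2 ≤ cabs u := by
      have h1 := inner_lower z x hz hnpos
      rw [← hudef, ← hsdef] at h1
      have h2 : s * dM x z ≤ s * (1/100*s) := mul_le_mul_of_nonneg_left hxz hspos.le
      have h3 : s*(1/100*s) = (n:ℝ)/100 := by
        rw [show s*(1/100*s) = (s*s)/100 from by ring, hss]
      linarith only [h1, h2, h3, hnpos]
    have hv'_low : (n:ℝ)/2 ≤ cabs v' := by
      have h1 := inner_lower z y hz hnpos
      rw [← hv'def, ← hsdef] at h1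
      have h2 : s * dM y z ≤ s * (1/100*s) := mul_le_mul_of_nonneg_left hyz hspos.le
      have h3 : s*(1/100*s) = (n:ℝ)/100 := by
        rw [show s*(1/100*s) = (s*s)/100 from by ring, hss]
      linarith only [h1, h2, h3, hnpos]
    have hy2 : l2norm y ≤ 2*s := by
      have h1 := l2norm_le_dM_add y z hz
      rw [← hsdef] at h1
      linarith only [h1, hyz, hspos]
    set τ : ℝ := σ * ((1/100:ℝ) * Real.sqrt ((n:ℝ) * Real.log n)) with hτdef
    have hτnonneg : 0 ≤ τ := by
      rw [hτdef]; positivity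
    have hτbound : τ ≤ 1/100*(c₀*(n:ℝ)) := by
      rw [hτdef, show σ*((1/100:ℝ)*Real.sqrt ((n:ℝ)*Real.log n))
        = 1/100*(σ*Real.sqrt ((n:ℝ)*Real.log n)) from by ring]
      linarith only [B2]
    set m : ℝ := (n:ℝ)/2 with hmdef
    have hm : 0 < m := by rw [hmdef]; linarith only [hnpos]
    have hcn : c₀*(n:ℝ) ≤ 1/1000*(n:ℝ) := mul_le_mul_of_nonneg_right hc₀small hnpos.le
    have h2τ : 2*τ ≤ m := by
      rw [hmdef]
      linarith only [hτbound, hcn, hnpos]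
    have main : ∀ θ : ℝ, dM (phaseProj a) (phaseProj b)
        ≤ (6*(1/100:ℝ) + 72*Cnoise*σ/s) * l2norm (x - Complex.exp (θ*Complex.I) • y) := by
      intro θ
      set e : ℂ := Complex.exp ((θ:ℝ)*Complex.I) with hedef
      have he1 : cabs e = 1 := Complex.norm_exp_ofReal_mul_I θ
      set d : ℝ := l2norm (x - e • y) with hddef
      have hd0 : 0 ≤ d := l2norm_nonneg _
      set v : ℂ := e * v' with hvdef
      have habsv : cabs v = cabs v' := by
        rw [hvdef, norm_mul, he1, one_mul]
      have hv_low : m ≤ cabs v := by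
        rw [habsv]; exact hv'_low
      have hu_low' : m ≤ cabs u := hu_low
      have hu0 : u ≠ 0 := by
        intro h; rw [h, norm_zero] at hu_low; linarith only [hu_low, hm]
      have hv0 : v ≠ 0 := by
        intro h; rw [h, norm_zero] at hv_low; linarith only [hv_low, hm]
      set U : ℂ := u / (cabs u : ℂ) with hUdef
      set V : ℂ := v / (cabs v : ℂ) with hVdef
      have habsU : cabs U = 1 := by
        rw [hUdef, norm_div, cabs_ofReal,
          _root_.abs_of_nonneg (norm_nonneg u), div_self (norm_ne_zero_iff.mpr hu0)]
      have habsV : cabs V = 1 := by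
        rw [hVdef, norm_div, cabs_ofReal,
          _root_.abs_of_nonneg (norm_nonneg v), div_self (norm_ne_zero_iff.mpr hv0)]
      set g : ℂ := U * (starRingEnd ℂ) V with hgdef
      have habsg : cabs g = 1 := by
        rw [hgdef, norm_mul, habsU, cabs_conj, habsV, one_mul]
      have hg0exp : Complex.exp ((Complex.arg g : ℝ) * Complex.I) = g := by
        have h0 := Complex.norm_mul_exp_arg_mul_I g
        rw [habsg] at h0; simpa using h0
      set ψ : ℝ := θ + Complex.arg g with hψdef
      have hexpψ : Complex.exp ((ψ:ℝ) * Complex.I) = e * g := by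
        rw [hψdef, Complex.ofReal_add, add_mul, Complex.exp_add, ← hedef, hg0exp]
      have habsψ : cabs (Complex.exp ((ψ:ℝ)*Complex.I)) = 1 :=
        Complex.norm_exp_ofReal_mul_I ψ
      have stepA : dM (phaseProj a) (phaseProj b)
          ≤ l2norm (phaseProj a - Complex.exp ((ψ:ℝ)*Complex.I) • phaseProj b) :=
        dM_le _ _ ψ
      set r : Fin n → ℂ := x - Complex.exp ((ψ:ℝ)*Complex.I) • y with hrdef
      set q : Fin n → ℂ := W.mulVec r with hqdef
      have huv : cabs (u - v) ≤ s * d := by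
        have h1 : u - v = ∑ j, (starRingEnd ℂ) (z j) * ((x - e • y) j) := by
          rw [hudef, hvdef, hv'def]
          exact inner_sub z x y e
        rw [h1]
        calc cabs (∑ j, (starRingEnd ℂ) (z j) * ((x - e • y) j))
            ≤ l2norm z * l2norm (x - e • y) := cauchy_schwarz z _
          _ = s * d := by rw [l2norm_z z hz, ← hsdef, ← hddef]
      have hΔ : |cabs u - cabs v| ≤ s*d :=
        le_trans (abs_norm_sub_norm_le u v) huv
      have h1g : cabs (1 - g) ≤ 4*d/s := by
        have hVV : (starRingEnd ℂ) V * v = (cabs v : ℂ) := by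
          rw [hVdef]; exact conj_phase_mul v hv0
        have h1 : (1 - g) * v = v - U * (cabs v:ℂ) := by
          rw [hgdef, sub_mul, one_mul, mul_assoc, hVV]
        have h2 : v = V * (cabs v : ℂ) := by
          rw [hVdef, div_mul_cancel₀]
          exact_mod_cast (norm_ne_zero_iff.mpr hv0)
        have h3 : (1-g)*v = (V - U) * (cabs v:ℂ) := by
          rw [h1]; nth_rewrite 1 [h2]; ring
        have hvpos : 0 < cabs v := norm_pos_iff.mpr hv0
        have h4 : cabs (1-g) = cabs (V - U) := by
          have e1 : cabs ((1-g)*v) = cabs (1-g) * cabs v :=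
            norm_mul _ _
          have e2 : cabs ((V-U)*((cabs v:ℝ):ℂ))
              = cabs (V-U) * cabs v := by
            rw [norm_mul, cabs_ofReal, _root_.abs_of_nonneg hvpos.le]
          rw [h3, e2] at e1
          exact (mul_right_cancel₀ hvpos.ne' e1.symm)
        have h5 : cabs (V - U) ≤ 2 * cabs (u - v) / cabs u := by
          have h6 := phase_lip u v hu0 hv0
          rw [← hUdef, ← hVdef] at h6
          calc cabs (V - U) = cabs (U - V) :=
              norm_sub_rev _ _
            _ ≤ _ := h6
        rw [h4]
        calc cabs (V-U) ≤ 2*cabs (u-v)/cabs u := h5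
          _ ≤ 2*(s*d)/((n:ℝ)/2) := by
              apply div_le_div₀ (mul_nonneg (by norm_num) (mul_nonneg hspos.le hd0))
                (by linarith only [huv]) (by linarith only [hnpos])
              rw [← hmdef]; exact hu_low'
          _ = 4*d/s := by
              rw [← hss]; field_simp; ring
      have hr9 : l2norm r ≤ 9*d := by
        have hsplitr : r = (x - e • y) + ((e - e*g) • y) := by
          funext k
          simp only [hrdef, Pi.sub_apply, Pi.add_apply, Pi.smul_apply, smul_eq_mul, hexpψ]
          ring
        rw [hsplitr]
        calc l2norm ((x - e•y) + ((e - e*g)•y))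
            ≤ l2norm (x - e•y) + l2norm ((e-e*g)•y) := l2norm_add_le _ _
          _ = d + cabs (e - e*g) * l2norm y := by rw [l2norm_smul', ← hddef]
          _ ≤ d + (4*d/s)*(2*s) := by
              apply add_le_add_right
              apply mul_le_mul _ hy2 (l2norm_nonneg y)
                (div_nonneg (by linarith only [hd0]) hspos.le)
              have hfac : e - e*g = e*(1-g) := by ring
              rw [hfac, norm_mul, he1, one_mul]
              exact h1g
          _ = 9*d := by field_simp; ring
      have hqd : l2norm q ≤ Cnoise*s*(9*d) := by
        calc l2norm q ≤ specNorm W * l2norm r := by rw [hqdef]; exact specNorm_bound W r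
          _ ≤ (Cnoise*s) * l2norm r := mul_le_mul_of_nonneg_right hW (l2norm_nonneg r)
          _ ≤ (Cnoise*s) * (9*d) :=
              mul_le_mul_of_nonneg_left hr9 (mul_nonneg hCn.le hspos.le)
      have hq_eq : ∀ k, (σ:ℂ) * (W.mulVec x k)
          - (σ:ℂ)*(Complex.exp ((ψ:ℝ)*Complex.I) * W.mulVec y k) = (σ:ℂ) * q k := by
        intro k
        rw [hqdef, hrdef, Matrix.mulVec_sub, Matrix.mulVec_smul]
        simp only [Pi.sub_apply, Pi.smul_apply, smul_eq_mul]
        ring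
      have hpoint : ∀ k, cabs
            ((phaseProj a - Complex.exp ((ψ:ℝ)*Complex.I) • phaseProj b) k)
          ≤ 4/m*(σ*cabs (q k)) + 4*τ/m^2*|cabs u - cabs v| := by
        intro k
        have hak : a k = ((cabs u :ℝ):ℂ) * (U * z k) + (σ:ℂ)*(W.mulVec x k) := by
          rw [hadef]
          rw [hexpand x k, ← hudef]
          have hUu : ((cabs u:ℝ):ℂ) * U = u := by
            rw [hUdef, mul_div_cancel₀]
            exact_mod_cast (norm_ne_zero_iff.mpr hu0)
          rw [← mul_assoc, hUu]
        have hbk : Complex.exp ((ψ:ℝ)*Complex.I) * b k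
            = ((cabs v :ℝ):ℂ) * (U * z k)
              + (σ:ℂ)*(Complex.exp ((ψ:ℝ)*Complex.I) * W.mulVec y k) := by
          have hgv : g * v = ((cabs v:ℝ):ℂ) * U := by
            rw [hgdef, mul_assoc, hVdef, conj_phase_mul v hv0]
            ring
          have hbk0 : b k = v' * z k + (σ:ℂ) * (W.mulVec y k) := by
            rw [hbdef]; exact hexpand y k
          rw [hbk0, hexpψ]
          have hstep : (e*g) * (v' * z k + (σ:ℂ) * (W.mulVec y k))
              = (g*(e*v')) * z k + (σ:ℂ)*((e*g) * W.mulVec y k) := by ring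
          rw [hstep, ← hvdef, hgv]
          ring
        have hDk : (phaseProj a - Complex.exp ((ψ:ℝ)*Complex.I) • phaseProj b) k
            = a k / ((cabs (a k):ℝ):ℂ)
              - (Complex.exp ((ψ:ℝ)*Complex.I) * b k)
                / ((cabs (Complex.exp ((ψ:ℝ)*Complex.I) * b k):ℝ):ℂ) := by
          simp only [Pi.sub_apply, Pi.smul_apply, smul_eq_mul, phaseProj]
          rw [phase_unit_mul _ _ habsψ]
        rw [hDk, hak, hbk]
        have habsw : cabs (U * z k) = 1 := by
          rw [norm_mul, habsU, hz k, mul_one]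
        have hsb : cabs ((σ:ℂ)*(W.mulVec x k)) ≤ τ := by
          rw [norm_mul, cabs_ofReal, _root_.abs_of_pos hσ, hτdef]
          apply mul_le_mul_of_nonneg_left _ hσ.le
          exact le_trans (abs_coord_le_linfty _ k) hxinf
        have htb : cabs ((σ:ℂ)*(Complex.exp ((ψ:ℝ)*Complex.I) * W.mulVec y k)) ≤ τ := by
          rw [norm_mul, norm_mul, cabs_ofReal, _root_.abs_of_pos hσ,
            habsψ, one_mul, hτdef]
          apply mul_le_mul_of_nonneg_left _ hσ.le
          exact le_trans (abs_coord_le_linfty _ k) hyinf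
        have hmain := phase_diff' (U * z k) ((σ:ℂ)*(W.mulVec x k))
          ((σ:ℂ)*(Complex.exp ((ψ:ℝ)*Complex.I) * W.mulVec y k))
          (cabs u) (cabs v) m τ habsw hm hu_low' hv_low hsb htb h2τ
        have hst := hq_eq k
        rw [hst] at hmain
        have habsq : cabs ((σ:ℂ) * q k) = σ * cabs (q k) := by
          rw [norm_mul, cabs_ofReal, _root_.abs_of_pos hσ]
        rw [habsq] at hmain
        exact hmain
      have hsum1 : l2norm (phaseProj a - Complex.exp ((ψ:ℝ)*Complex.I) • phaseProj b)
          ≤ Real.sqrt (∑ k, (4/m*(σ*cabs (q k))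
              + 4*τ/m^2*|cabs u - cabs v|)^2) :=
        l2norm_le_of_pointwise _ _ hpoint
      have hsum2 : Real.sqrt (∑ k, (4/m*(σ*cabs (q k))
              + 4*τ/m^2*|cabs u - cabs v|)^2)
          ≤ Real.sqrt (∑ k, (4/m*(σ*cabs (q k)))^2)
            + Real.sqrt (∑ _k : Fin n, (4*τ/m^2*|cabs u - cabs v|)^2) :=
        sqrt_sum_add_le _ _
      have hsum3 : Real.sqrt (∑ k, (4/m*(σ*cabs (q k)))^2) = (4/m*σ) * l2norm q := by
        have h1 : ∀ k : Fin n, (4/m*(σ*cabs (q k)))^2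
            = (4/m*σ)^2 * (cabs (q k))^2 := by
          intro k; ring
        rw [Finset.sum_congr rfl (fun k _ => h1 k), ← Finset.mul_sum,
          Real.sqrt_mul (sq_nonneg _),
          Real.sqrt_sq (le_of_lt (mul_pos (div_pos (by norm_num) hm) hσ))]
        rfl
      have hsum4 : Real.sqrt (∑ _k : Fin n, (4*τ/m^2*|cabs u - cabs v|)^2)
          = s * (4*τ/m^2*|cabs u - cabs v|) := by
        rw [Finset.sum_const, Finset.card_univ, Fintype.card_fin, nsmul_eq_mul,
          Real.sqrt_mul (by positivity),
          Real.sqrt_sq (mul_nonneg (div_nonneg (by linarith only [hτnonneg]) (by positivity))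
            (abs_nonneg _)),
          ← hsdef]
      have hfin1 : (4/m*σ) * l2norm q ≤ 72*Cnoise*σ/s * d := by
        have h1 : (4/m*σ) * l2norm q ≤ (4/m*σ) * (Cnoise*s*(9*d)) :=
          mul_le_mul_of_nonneg_left hqd (le_of_lt (mul_pos (div_pos (by norm_num) hm) hσ))
        have h2 : (4/m*σ) * (Cnoise*s*(9*d)) = 72*Cnoise*σ/s * d := by
          rw [hmdef, ← hss]
          field_simp
          ring
        linarith only [h1, h2]
      have hfin2 : s * (4*τ/m^2*|cabs u - cabs v|) ≤ 6*(1/100:ℝ) * d := by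
        have h1 : s * (4*τ/m^2*|cabs u - cabs v|) ≤ s * (4*τ/m^2*(s*d)) := by
          apply mul_le_mul_of_nonneg_left _ hspos.le
          apply mul_le_mul_of_nonneg_left hΔ
            (div_nonneg (by linarith only [hτnonneg]) (by positivity))
        have h2 : s * (4*τ/m^2*(s*d)) = (16*τ/(n:ℝ))*d := by
          rw [hmdef, ← hss]
          field_simp
          ring
        have h3 : (16*τ/(n:ℝ))*d ≤ 6*(1/100:ℝ)*d := by
          apply mul_le_mul_of_nonneg_right _ hd0
          rw [div_le_iff₀ hnpos]
          linarith only [hτbound, hcn, hnpos]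
        linarith only [h1, h2, h3]
      calc dM (phaseProj a) (phaseProj b)
          ≤ l2norm (phaseProj a - Complex.exp ((ψ:ℝ)*Complex.I) • phaseProj b) := stepA
        _ ≤ Real.sqrt (∑ k, (4/m*(σ*cabs (q k))
              + 4*τ/m^2*|cabs u - cabs v|)^2) := hsum1
        _ ≤ Real.sqrt (∑ k, (4/m*(σ*cabs (q k)))^2)
            + Real.sqrt (∑ _k : Fin n, (4*τ/m^2*|cabs u - cabs v|)^2) := hsum2
        _ = (4/m*σ) * l2norm q + s * (4*τ/m^2*|cabs u - cabs v|) := by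
            rw [hsum3, hsum4]
        _ ≤ 72*Cnoise*σ/s * d + 6*(1/100:ℝ) * d := add_le_add hfin1 hfin2
        _ = (6*(1/100:ℝ) + 72*Cnoise*σ/s) * d := by ring
    have hfinal : dM (phaseProj a) (phaseProj b)
        ≤ (6*(1/100:ℝ) + 72*Cnoise*σ/s) * dM x y := by
      have h1 : ∀ θ:ℝ, dM (phaseProj a) (phaseProj b) / (6*(1/100:ℝ) + 72*Cnoise*σ/s)
          ≤ l2norm (x - Complex.exp (θ*Complex.I) • y) := by
        intro θ
        rw [div_le_iff₀ hKpos, mul_comm]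
        exact main θ
      have h2 := le_dM x y _ h1
      rw [div_le_iff₀ hKpos] at h2
      calc dM (phaseProj a) (phaseProj b)
          ≤ dM x y * (6*(1/100:ℝ) + 72*Cnoise*σ/s) := h2
        _ = (6*(1/100:ℝ) + 72*Cnoise*σ/s) * dM x y := mul_comm _ _
    have hρK : (6*(1/100:ℝ) + 72*Cnoise*σ/s)
        ≤ (6*(1/100:ℝ) + 72*Cnoise*σ/s)
          / (1 - ((1/100:ℝ)^2/2 + 1/100*σ*Real.sqrt (Real.log n / n))) := by
      rw [le_div_iff₀ hden]
      exact mul_le_of_le_one_right hKnonneg (by linarith only [hEnonneg])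
    calc dM (phaseProj a) (phaseProj b)
        ≤ (6*(1/100:ℝ) + 72*Cnoise*σ/s) * dM x y := hfinal
      _ ≤ (6*(1/100:ℝ) + 72*Cnoise*σ/s)
          / (1 - ((1/100:ℝ)^2/2 + 1/100*σ*Real.sqrt (Real.log n / n))) * dM x y :=
        mul_le_mul_of_nonneg_right hρK (dM_nonneg x y)
end

section
/- Let C ∈ ℂ^{n×n} be Hermitian, let x̂ ∈ ℂⁿ be a unit-modulus vector, and set X̂ = x̂ x̂*. Suppose the dual certificate S = Re(diag(C X̂)) − C satisfies: S ⪰ 0, rank(S) = n − 1, and S x̂ = 0. Then X̂ is the unique optimal solution of the SDP: maximize Re(Trace(C X)) over Hermitian X ∈ ℂ^{n×n} subject to diag(X) = 1 and X ⪰ 0. -/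
open Matrix
open scoped BigOperators ComplexOrder

lemma trace_mul_conjTranspose_re {m p : Type*} [Fintype m] [Fintype p]
    (M : Matrix m p ℂ) :
    (Matrix.trace (M * Mᴴ)).re = ∑ k, ∑ j, Complex.normSq (M k j) := by
  simp [Matrix.trace, Matrix.mul_apply, Matrix.diag, Matrix.conjTranspose_apply,
    Complex.mul_conj, Complex.re_sum]

lemma psd_trace_key {n : ℕ} {S X : Matrix (Fin n) (Fin n) ℂ}
    (hS : S.PosSemidef) (hX : X.PosSemidef) :
    0 ≤ (Matrix.trace (S * X)).re ∧ ((Matrix.trace (S * X)).re = 0 → S * X = 0) := by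
  obtain ⟨A, hA⟩ : ∃ A, S = Aᴴ * A := by
    open scoped MatrixOrder in exact CStarAlgebra.nonneg_iff_eq_star_mul_self.mp hS.nonneg
  obtain ⟨B, hB⟩ : ∃ B, X = Bᴴ * B := by
    open scoped MatrixOrder in exact CStarAlgebra.nonneg_iff_eq_star_mul_self.mp hX.nonneg
  have h2 : Matrix.trace (S * X) = Matrix.trace ((A * Bᴴ) * (A * Bᴴ)ᴴ) := by
    rw [hA, hB, Matrix.conjTranspose_mul, Matrix.conjTranspose_conjTranspose,
      ← Matrix.mul_assoc (A * Bᴴ) B Aᴴ, Matrix.trace_mul_cycle (A * Bᴴ) B Aᴴ]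
    simp only [Matrix.mul_assoc]
  rw [h2, trace_mul_conjTranspose_re]
  constructor
  · exact Finset.sum_nonneg fun k _ => Finset.sum_nonneg fun j _ => Complex.normSq_nonneg _
  · intro h
    have hM : A * Bᴴ = 0 := by
      ext k j
      have h1 : ∀ k ∈ Finset.univ, (0:ℝ) ≤ ∑ j, Complex.normSq ((A * Bᴴ) k j) :=
        fun k _ => Finset.sum_nonneg fun j _ => Complex.normSq_nonneg _
      have h2' := (Finset.sum_eq_zero_iff_of_nonneg h1).mp h k (Finset.mem_univ k)
      have h3 := (Finset.sum_eq_zero_iff_of_nonneg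
        (fun j _ => Complex.normSq_nonneg ((A * Bᴴ) k j))).mp h2' j (Finset.mem_univ j)
      simpa using Complex.normSq_eq_zero.mp h3
    rw [hA, hB]
    calc Aᴴ * A * (Bᴴ * B) = Aᴴ * (A * Bᴴ) * B := by
          rw [Matrix.mul_assoc, Matrix.mul_assoc, Matrix.mul_assoc]
      _ = 0 := by rw [hM, Matrix.mul_zero, Matrix.zero_mul]

/-- **Dual certification for the unique SDP solution.**  Let `C` be Hermitian, `x̂`
unit-modulus, `X̂ = x̂ x̂*`, and suppose the dual certificate
`S = Re(diag(C X̂)) − C` satisfies `S ⪰ 0`, `rank S = n − 1`, and `S x̂ = 0`.  Then `X̂`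
is the unique optimal solution of the SDP
`max Re(Trace(C X))` over Hermitian `X ⪰ 0` with `diag(X) = 1`. -/
theorem dual_certification {n : ℕ} (C : Matrix (Fin n) (Fin n) ℂ)
    (hC : C.IsHermitian) (xhat : Fin n → ℂ) (hxhat : ∀ k, ‖xhat k‖ = 1)
    (hS_psd : (Matrix.diagonal
        (fun k => (((C * Matrix.vecMulVec xhat (star xhat)) k k).re : ℂ)) - C).PosSemidef)
    (hS_rank : (Matrix.diagonal
        (fun k => (((C * Matrix.vecMulVec xhat (star xhat)) k k).re : ℂ)) - C).rank = n - 1)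
    (hS_ker : (Matrix.diagonal
        (fun k => (((C * Matrix.vecMulVec xhat (star xhat)) k k).re : ℂ)) - C).mulVec xhat
      = 0) :
    (∀ X : Matrix (Fin n) (Fin n) ℂ, X.PosSemidef → (∀ k, X k k = 1) →
      (Matrix.trace (C * X)).re ≤
        (Matrix.trace (C * Matrix.vecMulVec xhat (star xhat))).re) ∧
    (∀ X : Matrix (Fin n) (Fin n) ℂ, X.PosSemidef → (∀ k, X k k = 1) →
      (Matrix.trace (C * X)).re =
        (Matrix.trace (C * Matrix.vecMulVec xhat (star xhat))).re →
      X = Matrix.vecMulVec xhat (star xhat)) := by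
  set Xhat := Matrix.vecMulVec xhat (star xhat) with hXhat
  set d : Fin n → ℝ := fun k => ((C * Xhat) k k).re with hd
  set S : Matrix (Fin n) (Fin n) ℂ := Matrix.diagonal (fun k => (d k : ℂ)) - C with hSdef
  -- value at Xhat
  have hval : (Matrix.trace (C * Xhat)).re = ∑ k, d k := by
    simp [Matrix.trace, Matrix.diag, Complex.re_sum, hd]
  -- trace formula for feasible X
  have hform : ∀ X : Matrix (Fin n) (Fin n) ℂ, (∀ k, X k k = 1) →
      (Matrix.trace (C * X)).re = (∑ k, d k) - (Matrix.trace (S * X)).re := by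
    intro X hX1
    have hCX : C * X = Matrix.diagonal (fun k => (d k : ℂ)) * X - S * X := by
      rw [hSdef, Matrix.sub_mul]; abel
    rw [hCX, Matrix.trace_sub, Complex.sub_re]
    congr 1
    have : Matrix.trace (Matrix.diagonal (fun k => (d k : ℂ)) * X) = ∑ k, (d k : ℂ) := by
      simp [Matrix.trace, Matrix.diag, Matrix.diagonal_mul, hX1]
    rw [this]
    simp [Complex.re_sum]
  have key := fun (X : Matrix (Fin n) (Fin n) ℂ) (hX : X.PosSemidef) =>
    psd_trace_key hS_psd hX
  constructor
  · intro X hX hX1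
    rw [hform X hX1, hval]
    have := (key X hX).1
    linarith
  · intro X hX hX1 heq
    rw [hform X hX1, hval] at heq
    have ht : (Matrix.trace (S * X)).re = 0 := by linarith
    have hSX : S * X = 0 := (key X hX).2 ht
    -- kernel argument
    rcases Nat.eq_zero_or_pos n with hn | hn
    · ext i j; exact absurd i.2 (by omega)
    have hn' : Nonempty (Fin n) := ⟨⟨0, hn⟩⟩
    have hxne : xhat ≠ 0 := by
      intro h
      have := hxhat ⟨0, hn⟩
      rw [h] at this
      simp at this
    have hxK : xhat ∈ LinearMap.ker S.mulVecLin := by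
      simpa [Matrix.mulVecLin_apply] using hS_ker
    have hrn := LinearMap.finrank_range_add_finrank_ker S.mulVecLin
    have hrange : Module.finrank ℂ (LinearMap.range S.mulVecLin) = n - 1 := hS_rank
    have hdim : Module.finrank ℂ (LinearMap.ker S.mulVecLin) = 1 := by
      rw [hrange] at hrn
      simp [Module.finrank_pi] at hrn
      omega
    have hspan : Submodule.span ℂ {xhat} = LinearMap.ker S.mulVecLin := by
      apply Submodule.eq_of_le_of_finrank_le
      · rwa [Submodule.span_singleton_le_iff_mem]
      · rw [hdim, finrank_span_singleton hxne]
    -- columns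
    ext k j
    have hcol : S.mulVecLin (fun i => X i j) = 0 := by
      funext k'
      have : (S * X) k' j = 0 := by rw [hSX]; rfl
      simpa [Matrix.mulVecLin_apply, Matrix.mulVec, dotProduct, Matrix.mul_apply] using this
    have : (fun i => X i j) ∈ Submodule.span ℂ {xhat} := by
      rw [hspan]; exact hcol
    obtain ⟨c, hc⟩ := Submodule.mem_span_singleton.mp this
    have hcj : c * xhat j = 1 := by
      have := congrFun hc j
      simp only [Pi.smul_apply, smul_eq_mul] at this
      rw [this, hX1 j]
    have hnorm : xhat j * (starRingEnd ℂ) (xhat j) = 1 := by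
      rw [Complex.mul_conj]
      norm_cast
      rw [Complex.normSq_eq_norm_sq, hxhat j]; norm_num
    have hcval : c = (starRingEnd ℂ) (xhat j) := by
      calc c = c * (xhat j * (starRingEnd ℂ) (xhat j)) := by rw [hnorm, mul_one]
        _ = (c * xhat j) * (starRingEnd ℂ) (xhat j) := by ring
        _ = (starRingEnd ℂ) (xhat j) := by rw [hcj, one_mul]
    have hXkj : X k j = c * xhat k := by
      have := congrFun hc k
      simp only [Pi.smul_apply, smul_eq_mul] at this
      rw [this]
    rw [hXkj, hcval, hXhat]
    simp [Matrix.vecMulVec_apply, mul_comm]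
end
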